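/- arXiv:1909.00638 — 6 statements merged into one kernel-verified Lean document; each statement's English description precedes it below -/
import Mathlib

section
/- Let G = (V,E) be a λ-two-sided spectral expander (all nontrivial eigenvalues of the random-walk adjacency operator have absolute value at most λ). Let V = A ⊔ B ⊔ C be a partition with Pr[A] ≤ Pr[B]. Then Pr[A] ≤ (1/((1−λ)·Pr[B]))·(Pr[E(A,B)] + λ·Pr[C]). -/
open Finset

variable {V : Type*} [Fintype V] [DecidableEq V]

/-- Total weight (probability mass) of a vertex. -/
def vmass (w : V → V → ℝ) (v : V) : ℝ := ∑ u, w v u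

/-- Probability mass of a set of vertices. -/
def pmass (w : V → V → ℝ) (S : Finset V) : ℝ := ∑ v ∈ S, vmass w v

/-- Mass of (oriented) edges from `S` to `T`. -/
def emass (w : V → V → ℝ) (S T : Finset V) : ℝ := ∑ v ∈ S, ∑ u ∈ T, w v u

/-- `G` is a `λ`-two-sided spectral expander: the Rayleigh quotient of the random-walk
adjacency operator on functions orthogonal to the constants is at most `λ` in absolute value. -/
def TwoSidedSpectralExpander (w : V → V → ℝ) (lam : ℝ) : Prop :=
  ∀ f : V → ℝ, ∑ v, vmass w v * f v = 0 →
    |∑ v, ∑ u, w v u * f v * f u| ≤ lam * ∑ v, vmass w v * f v ^ 2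

lemma key (w : V → V → ℝ) (hsym : ∀ v u, w v u = w u v)
    (htot : ∑ v, ∑ u, w v u = 1) (lam : ℝ)
    (hexp : TwoSidedSpectralExpander w lam) (S : Finset V) :
    |emass w S S - (pmass w S)^2| ≤ lam * (pmass w S * (1 - pmass w S)) := by
  set p := pmass w S with hp
  have hsum : ∑ v, vmass w v = 1 := htot
  set f : V → ℝ := fun v => (if v ∈ S then 1 else 0) - p with hf
  have hcol : ∀ v, ∑ u ∈ S, w v u = ∑ u ∈ S, w u v := by
    intro v; exact Finset.sum_congr rfl fun u _ => hsym v u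
  have hmean : ∑ v, vmass w v * f v = 0 := by
    simp only [hf, mul_sub, Finset.sum_sub_distrib, mul_ite, mul_one, mul_zero,
      Finset.sum_ite_mem, Finset.univ_inter, ← Finset.sum_mul, hsum]
    simp [hp, pmass]
  have hquad : ∑ v, ∑ u, w v u * f v * f u = emass w S S - p^2 := by
    have expand : ∀ v u : V, w v u * f v * f u =
        (if v ∈ S then (if u ∈ S then w v u else 0) else 0)
        - p * (if v ∈ S then w v u else 0)
        - p * (if u ∈ S then w v u else 0) + p * p * w v u := by
      intro v u
      by_cases hv : v ∈ S <;> by_cases hu : u ∈ S <;> simp [hf, hv, hu] <;> ring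
    simp only [expand]
    rw [Finset.sum_congr rfl (fun v _ => by
      rw [Finset.sum_add_distrib, Finset.sum_sub_distrib, Finset.sum_sub_distrib])]
    rw [Finset.sum_add_distrib, Finset.sum_sub_distrib, Finset.sum_sub_distrib]
    have e1 : ∑ v, ∑ u, (if v ∈ S then (if u ∈ S then w v u else 0) else 0) = emass w S S := by
      simp [Finset.sum_ite_mem, apply_ite (∑ u ∈ Finset.univ ∩ S, w · u), emass]
    have e2 : ∑ v, ∑ u, p * (if v ∈ S then w v u else 0) = p * p := by
      simp only [← Finset.mul_sum]
      rw [Finset.sum_congr rfl (fun v _ => by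
        rw [show (∑ u, if v ∈ S then w v u else 0) = if v ∈ S then vmass w v else 0 by
          split <;> simp [vmass]])]
      simp [Finset.sum_ite_mem, hp, pmass]
    have e3 : ∑ v, ∑ u, p * (if u ∈ S then w v u else 0) = p * p := by
      simp only [← Finset.mul_sum, Finset.sum_ite_mem, Finset.univ_inter]
      rw [Finset.sum_congr rfl (fun v _ => by rw [hcol v]), Finset.sum_comm]
      simp [hp, pmass, vmass]
    have e4 : ∑ v, ∑ u, p * p * w v u = p * p := by
      simp only [← Finset.mul_sum]
      rw [htot]; ring
    rw [e1, e2, e3, e4]; ring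
  have hnorm : ∑ v, vmass w v * f v ^ 2 = p * (1 - p) := by
    have expand : ∀ v : V, vmass w v * f v ^ 2 =
        (if v ∈ S then vmass w v else 0) - 2 * p * (if v ∈ S then vmass w v else 0)
        + p * p * vmass w v := by
      intro v; by_cases hv : v ∈ S <;> simp [hf, hv] <;> ring
    simp only [expand]
    rw [Finset.sum_add_distrib, Finset.sum_sub_distrib]
    simp only [Finset.sum_ite_mem, Finset.univ_inter, ← Finset.mul_sum, hsum]
    rw [show (∑ v ∈ S, vmass w v) = p from rfl]; ring
  have := hexp f hmean
  rw [hquad, hnorm] at this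
  linarith [abs_nonneg (emass w S S - p^2), this]

lemma pmass_nonneg' (w : V → V → ℝ) (hnn : ∀ v u, 0 ≤ w v u) (S : Finset V) :
    0 ≤ pmass w S :=
  Finset.sum_nonneg fun v _ => Finset.sum_nonneg fun u _ => hnn v u

lemma pmass_union (w : V → V → ℝ) {S T : Finset V} (h : Disjoint S T) :
    pmass w (S ∪ T) = pmass w S + pmass w T :=
  Finset.sum_union h

lemma emass_union_split (w : V → V → ℝ) {A B : Finset V} (h : Disjoint A B) :
    emass w (A ∪ B) (A ∪ B) =
      emass w A A + emass w A B + emass w B A + emass w B B := by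
  unfold emass
  rw [Finset.sum_union h]
  rw [Finset.sum_congr rfl (fun v _ => Finset.sum_union h (f := w v)),
      Finset.sum_congr rfl (fun v _ => Finset.sum_union h (f := w v))]
  rw [Finset.sum_add_distrib, Finset.sum_add_distrib]
  ring

lemma emass_symm' (w : V → V → ℝ) (hsym : ∀ v u, w v u = w u v) (S T : Finset V) :
    emass w S T = emass w T S := by
  unfold emass
  rw [Finset.sum_comm]
  exact Finset.sum_congr rfl fun u _ => Finset.sum_congr rfl fun v _ => hsym v u

/-- **Almost cut approximation property.** In a `λ`-two-sided spectral expander, for a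
partition `V = A ⊔ B ⊔ C` with `Pr[A] ≤ Pr[B]`,
`Pr[A] ≤ (1/((1−λ)·Pr[B]))·(Pr[E(A,B)] + λ·Pr[C])`. -/
theorem almost_cut_approximation
    (w : V → V → ℝ) (hsym : ∀ v u, w v u = w u v) (hnn : ∀ v u, 0 ≤ w v u)
    (htot : ∑ v, ∑ u, w v u = 1)
    (lam : ℝ) (hlam0 : 0 ≤ lam) (hlam1 : lam < 1)
    (hexp : TwoSidedSpectralExpander w lam)
    (A B C : Finset V)
    (hAB : Disjoint A B) (hAC : Disjoint A C) (hBC : Disjoint B C)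
    (hcover : A ∪ B ∪ C = Finset.univ)
    (hle : pmass w A ≤ pmass w B) :
    pmass w A ≤ (1 / ((1 - lam) * pmass w B)) * (emass w A B + lam * pmass w C) := by

  set a := pmass w A with ha
  set b := pmass w B with hb
  set c := pmass w C with hc
  have ha0 : 0 ≤ a := pmass_nonneg' w hnn A
  have hb0 : 0 ≤ b := pmass_nonneg' w hnn B
  have hc0 : 0 ≤ c := pmass_nonneg' w hnn C
  have habc : a + b + c = 1 := by
    have h1 : pmass w Finset.univ = 1 := htot
    rw [← hcover, pmass_union w (Finset.disjoint_union_left.mpr ⟨hAC, hBC⟩),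
        pmass_union w hAB] at h1
    linarith
  have hU : pmass w (A ∪ B) = a + b := pmass_union w hAB
  have hkA := key w hsym htot lam hexp A
  have hkB := key w hsym htot lam hexp B
  have hkU := key w hsym htot lam hexp (A ∪ B)
  rw [hU, emass_union_split w hAB, emass_symm' w hsym B A] at hkU
  rw [← hb] at hkB
  set E := emass w A B with hE
  set EA := emass w A A
  set EB := emass w B B
  have h1 : EA - a^2 ≤ lam * (a * (1-a)) := (abs_le.mp hkA).2
  have h2 : EB - b^2 ≤ lam * (b * (1-b)) := (abs_le.mp hkB).2
  have h3 : -(lam * ((a+b) * (1-(a+b)))) ≤ EA + E + E + EB - (a+b)^2 :=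
    (abs_le.mp hkU).1
  have i1 : lam * (a * (1 - a)) = lam*(a*b) + lam*(a*c) := by
    linear_combination (-(lam*a)) * habc
  have i2 : lam * (b * (1 - b)) = lam*(a*b) + lam*(b*c) := by
    linear_combination (-(lam*b)) * habc
  have i3 : lam * ((a+b) * (1-(a+b))) = lam*(a*c) + lam*(b*c) := by
    linear_combination (-(lam*(a+b))) * habc
  have i4 : lam*(a*c) + lam*(b*c) + lam*(c*c) = lam * c := by
    linear_combination (lam*c) * habc
  have hcc : 0 ≤ lam*(c*c) := mul_nonneg hlam0 (mul_nonneg hc0 hc0)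
  have hkey : (1 - lam) * (a * b) ≤ E + lam * c := by
    nlinarith [h1, h2, h3, i1, i2, i3, i4, hcc]
  rcases eq_or_lt_of_le hb0 with hbz | hbp
  · simp only [← hbz, mul_zero, div_zero, zero_mul]
    linarith
  · have hpos : 0 < (1 - lam) * b := mul_pos (by linarith) hbp
    rw [one_div, ← div_eq_inv_mul, le_div_iff₀ hpos]
    have hEnn : 0 ≤ E := Finset.sum_nonneg fun v _ => Finset.sum_nonneg fun u _ => hnn v u
    nlinarith
end

section
/- Let Y be a 2-dimensional 3-partite weighted simplicial complex with vertex parts Y[1], Y[2], Y[3]. Suppose that for every v ∈ Y[1], the link of v (a bipartite graph between Y[2] and Y[3]) is an η-bipartite expander. Let A^{1,2}, A^{1,3}, A^{2,3} denote the bipartite adjacency operators between the respective parts. Then λ(A^{2,3}) ≤ η + λ(A^{1,2})·λ(A^{1,3}). -/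
/-! On the link of `a ∈ Y1`, split `f` and `g` into their link means `F a`, `G a` and mean-zero
parts. The link expansion bounds the mean-zero contribution by `η ‖f‖ ‖g‖` after Cauchy–Schwarz
over `a`. The means are the averages of `f`, `g` along `A^{1,2}`, `A^{1,3}`, so they contribute
`⟨A^{1,2} f, A^{1,3} g⟩`, which is at most `λ₁₂ λ₁₃ ‖f‖ ‖g‖`. -/

open Finset

section Bipartite

variable {L R : Type*} [Fintype L] [Fintype R]

/-- Mass of a left vertex. -/
def lmass (w : L → R → ℝ) (v : L) : ℝ := ∑ u, w v u

/-- Mass of a right vertex. -/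
def rmass (w : L → R → ℝ) (u : R) : ℝ := ∑ v, w v u

/-- `λ`-bipartite expander: the bipartite averaging operator has norm at most `λ`
on the orthogonal complement of the constant functions (scale-invariant formulation). -/
def BipartiteExpander (w : L → R → ℝ) (lam : ℝ) : Prop :=
  ∀ (f : L → ℝ) (g : R → ℝ), ∑ v, lmass w v * f v = 0 → ∑ u, rmass w u * g u = 0 →
    |∑ v, ∑ u, w v u * f v * g u| ≤
      lam * Real.sqrt (∑ v, lmass w v * f v ^ 2) * Real.sqrt (∑ u, rmass w u * g u ^ 2)

end Bipartite

section WeightedMean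

variable {ι : Type*} [Fintype ι]

lemma sum_mul_sub_eq_zero_of_sum_mul_eq {q f : ι → ℝ} {F : ℝ}
    (hF : (∑ i, q i) * F = ∑ i, q i * f i) :
    ∑ i, q i * (f i - F) = 0 := by
  simp only [mul_sub, sum_sub_distrib, ← sum_mul, hF, sub_self]

lemma sum_mul_sub_sq_le_of_sum_mul_eq {q f : ι → ℝ} {F : ℝ} (hq : ∀ i, 0 ≤ q i)
    (hF : (∑ i, q i) * F = ∑ i, q i * f i) :
    ∑ i, q i * (f i - F) ^ 2 ≤ ∑ i, q i * f i ^ 2 := by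
  have hvar : ∑ i, q i * (f i - F) ^ 2 = ∑ i, q i * f i ^ 2 - (∑ i, q i) * F ^ 2 := by
    have hexpand : ∀ i, q i * (f i - F) ^ 2 = q i * f i ^ 2 - 2 * F * (q i * f i) + F ^ 2 * q i :=
      fun i => by ring
    simp only [hexpand, sum_add_distrib, sum_sub_distrib, ← mul_sum, ← hF]
    ring
  have hmass : 0 ≤ ∑ i, q i := sum_nonneg fun i _ => hq i
  rw [hvar]
  nlinarith [mul_nonneg hmass (sq_nonneg F)]

end WeightedMean

section Averaging

variable {L R : Type*} [Fintype R]

/-- At a vertex of mass `0` this is `0` (division by zero). -/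
noncomputable def lavg (w : L → R → ℝ) (g : R → ℝ) (v : L) : ℝ :=
  (∑ u, w v u * g u) / lmass w v

lemma lmass_mul_lavg {w : L → R → ℝ} (hw : ∀ v u, 0 ≤ w v u) (g : R → ℝ) (v : L) :
    lmass w v * lavg w g v = ∑ u, w v u * g u := by
  by_cases hv : lmass w v = 0
  · have hzero : ∀ u, w v u = 0 := fun u =>
      (sum_eq_zero_iff_of_nonneg fun u _ => hw v u).mp hv u (mem_univ u)
    simp [hv, hzero]
  · exact mul_div_cancel₀ _ hv

lemma sum_sum_mul_mul_eq_sum_lmass_mul_lavg [Fintype L] {w : L → R → ℝ}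
    (hw : ∀ v u, 0 ≤ w v u) (h : L → ℝ) (g : R → ℝ) :
    ∑ v, ∑ u, w v u * h v * g u = ∑ v, lmass w v * h v * lavg w g v := by
  refine sum_congr rfl fun v _ => ?_
  rw [mul_right_comm, lmass_mul_lavg hw, sum_mul]
  exact sum_congr rfl fun u _ => by ring

lemma sum_lmass_mul_lavg [Fintype L] {w : L → R → ℝ} (hw : ∀ v u, 0 ≤ w v u) (g : R → ℝ) :
    ∑ v, lmass w v * lavg w g v = ∑ u, rmass w u * g u := by
  simp only [lmass_mul_lavg hw, rmass, sum_mul]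
  exact sum_comm

lemma BipartiteExpander.sqrt_sum_lmass_mul_lavg_sq_le [Fintype L] {w : L → R → ℝ} {lam : ℝ}
    (hexp : BipartiteExpander w lam) (hw : ∀ v u, 0 ≤ w v u) (hlam : 0 ≤ lam) {g : R → ℝ}
    (hg : ∑ u, rmass w u * g u = 0) :
    Real.sqrt (∑ v, lmass w v * lavg w g v ^ 2) ≤
      lam * Real.sqrt (∑ u, rmass w u * g u ^ 2) := by
  set E := ∑ v, lmass w v * lavg w g v ^ 2
  have hbound := hexp (lavg w g) g ((sum_lmass_mul_lavg hw g).trans hg) hg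
  have hpair : ∑ v, ∑ u, w v u * lavg w g v * g u = E := by
    rw [sum_sum_mul_mul_eq_sum_lmass_mul_lavg hw]
    exact sum_congr rfl fun v _ => by ring
  rw [hpair] at hbound
  have hE : 0 ≤ E := sum_nonneg fun v _ =>
    mul_nonneg (sum_nonneg fun u _ => hw v u) (sq_nonneg _)
  rcases (Real.sqrt_nonneg E).eq_or_lt with hzero | hpos
  · rw [← hzero]
    positivity
  · refine le_of_mul_le_mul_right ?_ hpos
    calc Real.sqrt E * Real.sqrt E = E := Real.mul_self_sqrt hE
      _ ≤ |E| := le_abs_self E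
      _ ≤ _ := hbound
      _ = _ := by ring

end Averaging

section Mixing

variable {L R : Type*} [Fintype L] [Fintype R]

lemma sum_sum_mul_sub_mul_sub (w : L → R → ℝ) (f : L → ℝ) (g : R → ℝ) {F G : ℝ}
    (hF : (∑ v, lmass w v) * F = ∑ v, lmass w v * f v)
    (hG : (∑ u, rmass w u) * G = ∑ u, rmass w u * g u) :
    ∑ v, ∑ u, w v u * (f v - F) * (g u - G) =
      ∑ v, ∑ u, w v u * f v * g u - (∑ v, lmass w v) * F * G := by
  have hexpand : ∀ v u, w v u * (f v - F) * (g u - G) =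
      w v u * f v * g u - G * (w v u * f v) - F * (w v u * g u) + F * G * w v u :=
    fun v u => by ring
  have hleft : ∑ v, ∑ u, w v u * f v = ∑ v, lmass w v * f v := by
    simp only [lmass, sum_mul]
  have hright : ∑ v, ∑ u, w v u * g u = ∑ u, rmass w u * g u := by
    simp only [rmass, sum_mul]
    exact sum_comm
  have hmass : ∑ u, rmass w u = ∑ v, lmass w v := sum_comm
  simp only [hexpand, sum_add_distrib, sum_sub_distrib, ← mul_sum, hleft, hright]
  rw [← hF, ← hG, hmass]
  simp only [lmass]
  ring

lemma BipartiteExpander.abs_sum_sum_sub_le {w : L → R → ℝ} {eta : ℝ}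
    (hexp : BipartiteExpander w eta) (hw : ∀ v u, 0 ≤ w v u) (heta : 0 ≤ eta)
    (f : L → ℝ) (g : R → ℝ) {F G : ℝ}
    (hF : (∑ v, lmass w v) * F = ∑ v, lmass w v * f v)
    (hG : (∑ u, rmass w u) * G = ∑ u, rmass w u * g u) :
    |∑ v, ∑ u, w v u * f v * g u - (∑ v, lmass w v) * F * G| ≤
      eta * Real.sqrt (∑ v, lmass w v * f v ^ 2) * Real.sqrt (∑ u, rmass w u * g u ^ 2) := by
  rw [← sum_sum_mul_sub_mul_sub w f g hF hG]
  refine (hexp (fun v => f v - F) (fun u => g u - G)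
    (sum_mul_sub_eq_zero_of_sum_mul_eq hF) (sum_mul_sub_eq_zero_of_sum_mul_eq hG)).trans ?_
  have hl : ∀ v, 0 ≤ lmass w v := fun v => sum_nonneg fun u _ => hw v u
  have hr : ∀ u, 0 ≤ rmass w u := fun u => sum_nonneg fun v _ => hw v u
  exact mul_le_mul
    (mul_le_mul_of_nonneg_left (Real.sqrt_le_sqrt (sum_mul_sub_sq_le_of_sum_mul_eq hl hF)) heta)
    (Real.sqrt_le_sqrt (sum_mul_sub_sq_le_of_sum_mul_eq hr hG)) (Real.sqrt_nonneg _)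
    (mul_nonneg heta (Real.sqrt_nonneg _))

/-- Garland-type localization over the links `w i`. -/
lemma abs_sum_sum_sum_sub_le {ι : Type*} [Fintype ι] {w : ι → L → R → ℝ} {eta : ℝ}
    (hexp : ∀ i, BipartiteExpander (w i) eta) (hw : ∀ i v u, 0 ≤ w i v u) (heta : 0 ≤ eta)
    (f : L → ℝ) (g : R → ℝ) {F G : ι → ℝ}
    (hF : ∀ i, (∑ v, lmass (w i) v) * F i = ∑ v, lmass (w i) v * f v)
    (hG : ∀ i, (∑ u, rmass (w i) u) * G i = ∑ u, rmass (w i) u * g u) :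
    |∑ v, ∑ u, (∑ i, w i v u) * f v * g u - ∑ i, (∑ v, lmass (w i) v) * F i * G i| ≤
      eta * Real.sqrt (∑ v, lmass (fun v u => ∑ i, w i v u) v * f v ^ 2) *
        Real.sqrt (∑ u, rmass (fun v u => ∑ i, w i v u) u * g u ^ 2) := by
  set Pf : ι → ℝ := fun i => ∑ v, lmass (w i) v * f v ^ 2
  set Pg : ι → ℝ := fun i => ∑ u, rmass (w i) u * g u ^ 2
  have hPf : ∀ i, 0 ≤ Pf i := fun i => sum_nonneg fun v _ =>
    mul_nonneg (sum_nonneg fun u _ => hw i v u) (sq_nonneg _)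
  have hPg : ∀ i, 0 ≤ Pg i := fun i => sum_nonneg fun u _ =>
    mul_nonneg (sum_nonneg fun v _ => hw i v u) (sq_nonneg _)
  have hsumPf : ∑ i, Pf i = ∑ v, lmass (fun v u => ∑ i, w i v u) v * f v ^ 2 := by
    simp only [Pf, lmass, sum_mul]
    rw [sum_comm]
    exact sum_congr rfl fun v _ => sum_comm
  have hsumPg : ∑ i, Pg i = ∑ u, rmass (fun v u => ∑ i, w i v u) u * g u ^ 2 := by
    simp only [Pg, rmass, sum_mul]
    rw [sum_comm]
    exact sum_congr rfl fun u _ => sum_comm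
  have hsplit : ∑ v, ∑ u, (∑ i, w i v u) * f v * g u =
      ∑ i, ∑ v, ∑ u, w i v u * f v * g u := by
    simp only [sum_mul]
    calc _ = ∑ v, ∑ i, ∑ u, w i v u * f v * g u := sum_congr rfl fun v _ => sum_comm
      _ = _ := sum_comm
  rw [hsplit, ← sum_sub_distrib, ← hsumPf, ← hsumPg]
  calc _ ≤ ∑ i, |∑ v, ∑ u, w i v u * f v * g u - (∑ v, lmass (w i) v) * F i * G i| :=
        abs_sum_le_sum_abs _ _
    _ ≤ ∑ i, eta * (Real.sqrt (Pf i) * Real.sqrt (Pg i)) := sum_le_sum fun i _ => by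
        rw [← mul_assoc]
        exact (hexp i).abs_sum_sum_sub_le (hw i) heta f g (hF i) (hG i)
    _ = eta * ∑ i, Real.sqrt (Pf i) * Real.sqrt (Pg i) := (mul_sum _ _ _).symm
    _ ≤ eta * (Real.sqrt (∑ i, Pf i) * Real.sqrt (∑ i, Pg i)) :=
        mul_le_mul_of_nonneg_left (Real.sum_sqrt_mul_sqrt_le _ hPf hPg) heta
    _ = _ := by ring

end Mixing

/-- `|⟨A₁ f, A₂ g⟩| ≤ λ₁ λ₂ ‖f‖ ‖g‖` for the averaging operators `A₁`, `A₂` onto the common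
side `I`. -/
lemma abs_sum_lmass_mul_lavg_mul_lavg_le {I J K : Type*} [Fintype I] [Fintype J] [Fintype K]
    {w₁ : I → J → ℝ} {w₂ : I → K → ℝ} {l₁ l₂ : ℝ}
    (hexp₁ : BipartiteExpander w₁ l₁) (hexp₂ : BipartiteExpander w₂ l₂)
    (hw₁ : ∀ i j, 0 ≤ w₁ i j) (hw₂ : ∀ i k, 0 ≤ w₂ i k) (hl₁ : 0 ≤ l₁) (hl₂ : 0 ≤ l₂)
    (hmass : lmass w₁ = lmass w₂) {f : J → ℝ} {g : K → ℝ}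
    (hf : ∑ j, rmass w₁ j * f j = 0) (hg : ∑ k, rmass w₂ k * g k = 0) :
    |∑ i, lmass w₁ i * lavg w₁ f i * lavg w₂ g i| ≤
      l₁ * l₂ * Real.sqrt (∑ j, rmass w₁ j * f j ^ 2) *
        Real.sqrt (∑ k, rmass w₂ k * g k ^ 2) := by
  have hG : ∑ i, lmass w₁ i * lavg w₂ g i = 0 := by
    rw [hmass, sum_lmass_mul_lavg hw₂, hg]
  have hpair : ∑ i, ∑ j, w₁ i j * lavg w₂ g i * f j =
      ∑ i, lmass w₁ i * lavg w₁ f i * lavg w₂ g i := by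
    rw [sum_sum_mul_mul_eq_sum_lmass_mul_lavg hw₁]
    exact sum_congr rfl fun i _ => by ring
  have hnorm := hexp₂.sqrt_sum_lmass_mul_lavg_sq_le hw₂ hl₂ hg
  rw [← hmass] at hnorm
  calc _ = _ := congrArg abs hpair.symm
    _ ≤ l₁ * Real.sqrt (∑ i, lmass w₁ i * lavg w₂ g i ^ 2) *
          Real.sqrt (∑ j, rmass w₁ j * f j ^ 2) := hexp₁ _ f hG hf
    _ ≤ l₁ * (l₂ * Real.sqrt (∑ k, rmass w₂ k * g k ^ 2)) *
          Real.sqrt (∑ j, rmass w₁ j * f j ^ 2) := by gcongr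
    _ = _ := by ring

theorem three_partite_trickling_general
    {Y1 Y2 Y3 : Type*} [Fintype Y1] [Fintype Y2] [Fintype Y3]
    (p : Y1 → Y2 → Y3 → ℝ) (hnn : ∀ a b c, 0 ≤ p a b c)
    (eta l12 l13 : ℝ) (heta : 0 ≤ eta) (h12 : 0 ≤ l12) (h13 : 0 ≤ l13)
    (hlink : ∀ a : Y1, BipartiteExpander (fun b c => p a b c) eta)
    (h1 : BipartiteExpander (fun (a : Y1) (b : Y2) => ∑ c, p a b c) l12)
    (h2 : BipartiteExpander (fun (a : Y1) (c : Y3) => ∑ b, p a b c) l13) :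
    BipartiteExpander (fun (b : Y2) (c : Y3) => ∑ a, p a b c) (eta + l12 * l13) := by
  intro f g hf hg
  have hr₁₂ : rmass (fun a b => ∑ c, p a b c) = lmass (fun b c => ∑ a, p a b c) :=
    funext fun b => sum_comm
  have hr₁₃ : rmass (fun a c => ∑ b, p a b c) = rmass (fun b c => ∑ a, p a b c) :=
    funext fun c => sum_comm
  have hp₁₂ : ∀ a b, 0 ≤ ∑ c, p a b c := fun a b => sum_nonneg fun c _ => hnn a b c
  have hp₁₃ : ∀ a c, 0 ≤ ∑ b, p a b c := fun a c => sum_nonneg fun b _ => hnn a b c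
  have hlocal := abs_sum_sum_sum_sub_le hlink hnn heta f g
    (fun a => lmass_mul_lavg hp₁₂ f a) (fun a => lmass_mul_lavg hp₁₃ g a)
  have hglobal := abs_sum_lmass_mul_lavg_mul_lavg_le h1 h2 hp₁₂ hp₁₃ h12 h13
    (funext fun a => sum_comm) (hr₁₂ ▸ hf) (hr₁₃ ▸ hg)
  rw [hr₁₂, hr₁₃] at hglobal
  -- the total mass of the link of `a` is `lmass` of `A^{1,2}` at `a` only after unfolding
  simp only [lmass, rmass] at hlocal hglobal ⊢
  linarith [(abs_sub_abs_le_abs_sub _ _).trans hlocal]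

/-- **Trickling lemma for 2-dimensional 3-partite complexes.** Let `Y` be a 2-dimensional
3-partite complex, given by a probability distribution `p` on its triangles
(one vertex in each of `Y1, Y2, Y3`). If the link of every vertex of `Y1` is an
`η`-bipartite expander, and the bipartite graphs between `(Y1,Y2)` and `(Y1,Y3)` are
`λ₁₂`- and `λ₁₃`-bipartite expanders respectively, then the bipartite graph between
`(Y2,Y3)` satisfies `λ(A^{2,3}) ≤ η + λ₁₂·λ₁₃`. -/
theorem three_partite_trickling
    {Y1 Y2 Y3 : Type*} [Fintype Y1] [Fintype Y2] [Fintype Y3]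
    (p : Y1 → Y2 → Y3 → ℝ) (hnn : ∀ a b c, 0 ≤ p a b c)
    (htot : ∑ a, ∑ b, ∑ c, p a b c = 1)
    (eta l12 l13 : ℝ) (heta : 0 ≤ eta) (h12 : 0 ≤ l12) (h13 : 0 ≤ l13)
    (hlink : ∀ a : Y1, BipartiteExpander (fun b c => p a b c) eta)
    (h1 : BipartiteExpander (fun (a : Y1) (b : Y2) => ∑ c, p a b c) l12)
    (h2 : BipartiteExpander (fun (a : Y1) (c : Y3) => ∑ b, p a b c) l13) :
    BipartiteExpander (fun (b : Y2) (c : Y3) => ∑ a, p a b c) (eta + l12 * l13) :=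
  three_partite_trickling_general p hnn eta l12 l13 heta h12 h13 hlink h1 h2
end

section
/- Let X be a d-partite simplicial complex such that every link of X (including the empty face's link, i.e. X itself) has a connected underlying graph. Then for every pair of distinct colors i, j ∈ [d], the bipartite graph induced between vertices of color i and vertices of color j (edges being the 1-faces of color {i,j}) is connected. -/
open Finset Relation

/-!
Two vertices `u`, `w` of colours `i` or `j` with a common neighbour `v` are joined by an
`{i, j}`-coloured path: through `v` itself if `v` has colour `i` or `j`, and otherwise inside the
link of `v`, which satisfies the same hypotheses and has fewer faces. A walk
`a = v₀, v₁, …, vₙ = b` in the underlying graph then lifts: choose in a face through each edge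
`vₖvₖ₊₁` a vertex `uₖ` of colour `i`; consecutive `uₖ` share the neighbour `vₖ₊₁`.
-/

section

variable {V C : Type*} [DecidableEq V]

def IsDownClosed (faces : Finset (Finset V)) : Prop :=
  ∀ s ∈ faces, ∀ t ⊆ s, t ∈ faces

def LinkAdj (faces : Finset (Finset V)) (s : Finset V) (x y : V) : Prop :=
  x ∉ s ∧ y ∉ s ∧ x ≠ y ∧ insert x (insert y s) ∈ faces

def LinkConnected (faces : Finset (Finset V)) (s : Finset V) : Prop :=
  ∀ a b : V, a ∉ s → b ∉ s → insert a s ∈ faces → insert b s ∈ faces →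
    ReflTransGen (LinkAdj faces s) a b

def ColorAdj (faces : Finset (Finset V)) (col : V → C) (i j : C) (x y : V) : Prop :=
  ({x, y} : Finset V) ∈ faces ∧ ((col x = i ∧ col y = j) ∨ (col x = j ∧ col y = i))

def vertexLink (faces : Finset (Finset V)) (v : V) : Finset (Finset V) :=
  faces.filter fun t => v ∉ t ∧ insert v t ∈ faces

variable {faces : Finset (Finset V)} {col : V → C} {i j : C} {v : V}

theorem mem_vertexLink {t : Finset V} :
    t ∈ vertexLink faces v ↔ t ∈ faces ∧ v ∉ t ∧ insert v t ∈ faces :=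
  mem_filter

theorem vertexLink_subset : vertexLink faces v ⊆ faces :=
  filter_subset _ _

theorem vertexLink_ssubset (hv : {v} ∈ faces) : vertexLink faces v ⊂ faces :=
  (ssubset_iff_of_subset vertexLink_subset).2
    ⟨{v}, hv, fun h => (mem_vertexLink.1 h).2.1 (mem_singleton_self v)⟩

theorem singleton_mem_vertexLink (hdown : IsDownClosed faces) {u : V} (huv : u ≠ v)
    (h : ({v, u} : Finset V) ∈ faces) : {u} ∈ vertexLink faces v :=
  mem_vertexLink.2 ⟨hdown _ h _ (by simp), by simpa using huv.symm, h⟩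

theorem IsDownClosed.vertexLink (hdown : IsDownClosed faces) :
    IsDownClosed (vertexLink faces v) := by
  intro s hs t hts
  obtain ⟨hs, hvs, hvsf⟩ := mem_vertexLink.1 hs
  exact mem_vertexLink.2
    ⟨hdown _ hs _ hts, fun hvt => hvs (hts hvt), hdown _ hvsf _ (insert_subset_insert _ hts)⟩

theorem exists_color_vertexLink (hdown : IsDownClosed faces)
    (hcol : ∀ s ∈ faces, ∃ r ∈ faces, s ⊆ r ∧ ∃ x ∈ r, col x = i) (hv : col v ≠ i) :
    ∀ s ∈ vertexLink faces v, ∃ r ∈ vertexLink faces v, s ⊆ r ∧ ∃ x ∈ r, col x = i := by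
  intro s hs
  obtain ⟨-, hvs, hvsf⟩ := mem_vertexLink.1 hs
  obtain ⟨r, hr, hsr, x, hxr, hx⟩ := hcol _ hvsf
  have hvr : v ∈ r := hsr (mem_insert_self v s)
  refine ⟨r.erase v, ?_, ?_, x, mem_erase.2 ⟨?_, hxr⟩, hx⟩
  · exact mem_vertexLink.2
      ⟨hdown _ hr _ (erase_subset v r), notMem_erase v r, by rwa [insert_erase hvr]⟩
  · exact fun y hy => mem_erase.2 ⟨fun hyv => hvs (hyv ▸ hy), hsr (mem_insert_of_mem hy)⟩
  · rintro rfl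
    exact hv hx

theorem LinkAdj.vertexLink (hdown : IsDownClosed faces) {s : Finset V} (hvs : v ∉ s) {x y : V}
    (h : LinkAdj faces (insert v s) x y) : LinkAdj (vertexLink faces v) s x y := by
  obtain ⟨hx, hy, hxy, hf⟩ := h
  rw [mem_insert, not_or] at hx hy
  refine ⟨hx.2, hy.2, hxy, mem_vertexLink.2 ⟨hdown _ hf _ ?_, ?_, ?_⟩⟩
  · exact insert_subset_insert _ (insert_subset_insert _ (subset_insert _ _))
  · simp [Ne.symm hx.1, Ne.symm hy.1, hvs]
  · rwa [insert_comm v x, insert_comm v y]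

theorem LinkConnected.vertexLink (hdown : IsDownClosed faces) {s : Finset V} (hvs : v ∉ s)
    (h : LinkConnected faces (insert v s)) : LinkConnected (vertexLink faces v) s := by
  intro a b has hbs ha hb
  obtain ⟨-, hva, haf⟩ := mem_vertexLink.1 ha
  obtain ⟨-, hvb, hbf⟩ := mem_vertexLink.1 hb
  rw [mem_insert, not_or] at hva hvb
  refine ReflTransGen.mono (fun _ _ => LinkAdj.vertexLink hdown hvs) _ _ (h a b ?_ ?_ ?_ ?_)
  · simp [has, Ne.symm hva.1]
  · simp [hbs, Ne.symm hvb.1]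
  · rwa [insert_comm]
  · rwa [insert_comm]

theorem ColorAdj.mono {faces' : Finset (Finset V)} (h : faces ⊆ faces') {x y : V}
    (hxy : ColorAdj faces col i j x y) : ColorAdj faces' col i j x y :=
  ⟨h hxy.1, hxy.2⟩

theorem reflTransGen_colorAdj_of_mem
    (hproper : ∀ x y : V, x ≠ y → ({x, y} : Finset V) ∈ faces → col x ≠ col y)
    {x y : V} (hxy : ({x, y} : Finset V) ∈ faces)
    (hx : col x = i ∨ col x = j) (hy : col y = i ∨ col y = j) :
    ReflTransGen (ColorAdj faces col i j) x y := by
  by_cases hne : x = y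
  · rw [hne]
  have hcol := hproper x y hne hxy
  refine .single ⟨hxy, ?_⟩
  rcases hx with hx | hx <;> rcases hy with hy | hy
  all_goals first | exact absurd (hx.trans hy.symm) hcol | tauto

theorem reflTransGen_colorAdj_of_commonNeighbor (hdown : IsDownClosed faces)
    (hcol : ∀ s ∈ faces, ∃ r ∈ faces, s ⊆ r ∧ ∃ x ∈ r, col x = i)
    (hcommon : ∀ v u w : V, ({u, v} : Finset V) ∈ faces → ({v, w} : Finset V) ∈ faces →
      (col u = i ∨ col u = j) → (col w = i ∨ col w = j) →
      ReflTransGen (ColorAdj faces col i j) u w)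
    (hconn : LinkConnected faces ∅) {a b : V}
    (ha : ({a} : Finset V) ∈ faces) (hb : ({b} : Finset V) ∈ faces)
    (hcola : col a = i ∨ col a = j) (hcolb : col b = i ∨ col b = j) :
    ReflTransGen (ColorAdj faces col i j) a b := by
  have hwalk := hconn a b (notMem_empty a) (notMem_empty b) (by simpa using ha) (by simpa using hb)
  suffices ∀ v, ReflTransGen (LinkAdj faces ∅) v b → ∀ u, ({u, v} : Finset V) ∈ faces →
      (col u = i ∨ col u = j) → ReflTransGen (ColorAdj faces col i j) u b from
    this a hwalk a (by simpa using ha) hcola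
  intro v hvb
  induction hvb using ReflTransGen.head_induction_on with
  | refl => exact fun u hub hu => hcommon b u b hub (by simpa using hb) hu hcolb
  | @head v w hvw _ ih =>
    intro u huv hu
    obtain ⟨r, hr, hvwr, x, hxr, hx⟩ := hcol _ (by simpa using hvw.2.2.2)
    have hface : ∀ y ∈ ({v, w} : Finset V), ({x, y} : Finset V) ∈ faces := fun y hy =>
      hdown _ hr _ (insert_subset hxr (singleton_subset_iff.2 (hvwr hy)))
    have hvx : ({v, x} : Finset V) ∈ faces := pair_comm x v ▸ hface v (by simp)
    exact (hcommon v u x huv hvx hu (.inl hx)).trans (ih x (hface w (by simp)) (.inl hx))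

theorem reflTransGen_colorAdj (hdown : IsDownClosed faces)
    (hproper : ∀ x y : V, x ≠ y → ({x, y} : Finset V) ∈ faces → col x ≠ col y)
    (hcol : ∀ s ∈ faces, ∃ r ∈ faces, s ⊆ r ∧ ∃ x ∈ r, col x = i)
    (hlink : ∀ s ∈ faces, (∀ x ∈ s, col x ≠ i ∧ col x ≠ j) → LinkConnected faces s)
    {a b : V} (ha : ({a} : Finset V) ∈ faces) (hb : ({b} : Finset V) ∈ faces)
    (hcola : col a = i ∨ col a = j) (hcolb : col b = i ∨ col b = j) :
    ReflTransGen (ColorAdj faces col i j) a b := by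
  induction faces using Finset.strongInduction generalizing a b with
  | H faces ih =>
  refine reflTransGen_colorAdj_of_commonNeighbor hdown hcol ?_
    (hlink ∅ (hdown _ ha _ (empty_subset _)) (by simp)) ha hb hcola hcolb
  intro v u w huv hvw hu hw
  by_cases hv : col v = i ∨ col v = j
  · exact (reflTransGen_colorAdj_of_mem hproper huv hu hv).trans
      (reflTransGen_colorAdj_of_mem hproper hvw hv hw)
  rw [not_or] at hv
  have hne : ∀ y, (col y = i ∨ col y = j) → y ≠ v := by
    rintro y hy rfl
    tauto
  refine ReflTransGen.mono (fun _ _ => ColorAdj.mono vertexLink_subset) _ _ <|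
    ih _ (vertexLink_ssubset (hdown _ hvw _ (by simp))) hdown.vertexLink
      (fun x y hxy hf => hproper x y hxy (vertexLink_subset hf))
      (exists_color_vertexLink hdown hcol hv.1) ?_
      (singleton_mem_vertexLink hdown (hne u hu) (pair_comm u v ▸ huv))
      (singleton_mem_vertexLink hdown (hne w hw) hvw) hu hw
  intro s hs hsc
  obtain ⟨-, hvs, hvsf⟩ := mem_vertexLink.1 hs
  exact (hlink _ hvsf (forall_mem_insert _ _ _ |>.2 ⟨hv, hsc⟩)).vertexLink hdown hvs

end

theorem partite_color_connectivity_general {V : Type*} [DecidableEq V] (d : ℕ)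
    (faces : Finset (Finset V))
    (hdown : ∀ s ∈ faces, ∀ t ⊆ s, t ∈ faces)
    (col : V → Fin d)
    (hcolorful : ∀ s ∈ faces, (s.image col).card = s.card)
    (htop : ∀ s ∈ faces, ∃ r ∈ faces, s ⊆ r ∧ r.card = d)
    (hlinkconn : ∀ s ∈ faces, ∀ a b : V, a ∉ s → b ∉ s →
      insert a s ∈ faces → insert b s ∈ faces →
      Relation.ReflTransGen
        (fun x y => x ∉ s ∧ y ∉ s ∧ x ≠ y ∧ insert x (insert y s) ∈ faces) a b)
    (i j : Fin d)
    (a b : V) (ha : ({a} : Finset V) ∈ faces) (hb : ({b} : Finset V) ∈ faces)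
    (hcola : col a = i ∨ col a = j) (hcolb : col b = i ∨ col b = j) :
    Relation.ReflTransGen
      (fun x y => ({x, y} : Finset V) ∈ faces ∧
        ((col x = i ∧ col y = j) ∨ (col x = j ∧ col y = i))) a b := by
  have hproper : ∀ x y : V, x ≠ y → ({x, y} : Finset V) ∈ faces → col x ≠ col y :=
    fun x y hxy hf h => hxy (card_image_iff.1 (hcolorful _ hf) (by simp) (by simp) h)
  have hcol : ∀ s ∈ faces, ∃ r ∈ faces, s ⊆ r ∧ ∃ x ∈ r, col x = i := by
    intro s hs
    obtain ⟨r, hr, hsr, hcard⟩ := htop s hs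
    have hall : r.image col = univ :=
      eq_univ_of_card _ (by rw [hcolorful r hr, hcard, Fintype.card_fin])
    exact ⟨r, hr, hsr, mem_image.1 (hall ▸ mem_univ i)⟩
  exact reflTransGen_colorAdj hdown hproper hcol (fun s hs _ => hlinkconn s hs) ha hb hcola hcolb

/-- **Color connectivity of partite complexes.** Let `X` be a `d`-partite simplicial complex
(coloring `col : V → Fin d`, injective on every face, every face contained in a top face of
size `d`) such that the underlying graph of every link (including that of the empty face,
i.e. of `X` itself) is connected. Then for every pair of distinct colors `i ≠ j`, the
bipartite graph induced between the vertices of color `i` and the vertices of color `j`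
(edges being the `1`-faces of color `{i,j}`) is connected. -/
theorem partite_color_connectivity {V : Type*} [DecidableEq V] (d : ℕ)
    (faces : Finset (Finset V))
    (hdown : ∀ s ∈ faces, ∀ t ⊆ s, t ∈ faces)
    (hempty : (∅ : Finset V) ∈ faces)
    (col : V → Fin d)
    (hcolorful : ∀ s ∈ faces, (s.image col).card = s.card)
    (htop : ∀ s ∈ faces, ∃ r ∈ faces, s ⊆ r ∧ r.card = d)
    (hlinkconn : ∀ s ∈ faces, ∀ a b : V, a ∉ s → b ∉ s →
      insert a s ∈ faces → insert b s ∈ faces →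
      Relation.ReflTransGen
        (fun x y => x ∉ s ∧ y ∉ s ∧ x ≠ y ∧ insert x (insert y s) ∈ faces) a b)
    (i j : Fin d) (hij : i ≠ j)
    (a b : V) (ha : ({a} : Finset V) ∈ faces) (hb : ({b} : Finset V) ∈ faces)
    (hcola : col a = i ∨ col a = j) (hcolb : col b = i ∨ col b = j) :
    Relation.ReflTransGen
      (fun x y => ({x, y} : Finset V) ∈ faces ∧
        ((col x = i ∧ col y = j) ∨ (col x = j ∧ col y = i))) a b :=
  partite_color_connectivity_general d faces hdown col hcolorful htop hlinkconn i j a b ha hb hcola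
    hcolb
end

section
/- In the affine Grassmann poset over F_q^n, fix a subspace u of dimension ℓ₃ and integers ℓ₁, ℓ₂ with ℓ₁ + ℓ₂ + ℓ₃ + 3 ≤ n. The probability that two independently uniformly chosen affine subspaces w₁ of dimension ℓ₁ and w₂ of dimension ℓ₂ satisfy dim(span(w₁, w₂, u)) = ℓ₁ + ℓ₂ + ℓ₃ + 2 is at least 1 − 2/q^{n−ℓ₁−ℓ₂−ℓ₃−1}. -/
/-!
Draw `l₁ + l₂ + 2` points of `F^n` independently and uniformly and let `w₁`, `w₂` be the affine
spans of the first `l₁ + 1` and of the last `l₂ + 1` of them. Every pair `(w₁, w₂)` of dimensions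
`(l₁, l₂)` arises from the same number of point tuples, so conditioned on having these dimensions
the pair is uniformly distributed, and it suffices to bound the probability that some point falls
into the affine span of `u` and the points drawn before it. Otherwise both spans have the expected
dimension and `span(w₁, w₂, u)` has dimension `l₁ + l₂ + l₃ + 2`. The `j`-th point falls into a
span of dimension `l₃ + j` with probability `q^(l₃ + j - n)`, and the geometric series of these
bounds is at most `2 / q^(n - l₁ - l₂ - l₃ - 1)`.
-/

open Module Set AffineSubspace

section DoubleCounting

variable {α β : Type*}

theorem card_fiber_prodMap {α₁ α₂ β₁ β₂ : Type*} (f₁ : α₁ → β₁) (f₂ : α₂ → β₂) (b : β₁ × β₂) :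
    Nat.card {x // Prod.map f₁ f₂ x = b} =
      Nat.card {a // f₁ a = b.1} * Nat.card {a // f₂ a = b.2} := by
  rw [← Nat.card_prod]
  exact Nat.card_congr ((Equiv.subtypeEquivRight fun _ => Prod.ext_iff).trans
    (Equiv.subtypeProdEquivProd (p := fun a => f₁ a = b.1) (q := fun a => f₂ a = b.2)))

variable [Finite α] [Finite β]

theorem card_subtype_comp_eq_mul (f : α → β) {R : β → Prop} {c : ℕ}
    (hc : ∀ b, R b → Nat.card {a // f a = b} = c) :
    Nat.card {a // R (f a)} = Nat.card {b // R b} * c := by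
  have := Fintype.ofFinite {b // R b}
  rw [← Nat.card_congr (Equiv.sigmaSubtypeFiberEquivSubtype f fun _ => Iff.rfl), Nat.card_sigma,
    Finset.sum_congr rfl fun b _ => hc b.1 b.2, Finset.sum_const, Finset.card_univ, smul_eq_mul,
    Nat.card_eq_fintype_card]

theorem card_mul_card_le_card_mul_card_of_card_fiber_eq (f : α → β) {G : α → Prop}
    {P Q : β → Prop} (hG : ∀ a, G a → Q (f a)) (hQ : ∀ b, Q b → P b)
    (hfib : ∀ b b', P b → P b' → Nat.card {a // f a = b} = Nat.card {a // f a = b'}) :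
    Nat.card {a // G a} * Nat.card {b // P b} ≤ Nat.card {b // Q b} * Nat.card α := by
  rcases isEmpty_or_nonempty {b // P b} with hP | ⟨b₀, hb₀⟩
  · simp
  have hPc := card_subtype_comp_eq_mul f fun b hb => hfib b b₀ hb hb₀
  have hQc := card_subtype_comp_eq_mul f fun b hb => hfib b b₀ (hQ b hb) hb₀
  calc Nat.card {a // G a} * Nat.card {b // P b}
      ≤ Nat.card {a // Q (f a)} * Nat.card {b // P b} := by
        gcongr
        exact Nat.card_le_card_of_injective _ (Subtype.impEmbedding _ _ hG).injective
    _ = Nat.card {b // Q b} * Nat.card {a // P (f a)} := by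
        rw [hPc, hQc]
        ring
    _ ≤ Nat.card {b // Q b} * Nat.card α := by
        gcongr
        exact Finite.card_subtype_le _

theorem mul_card_le_card_of_card_fiber_eq [Nonempty α] (f : α → β) {G : α → Prop}
    {P Q : β → Prop} (hG : ∀ a, G a → Q (f a)) (hQ : ∀ b, Q b → P b)
    (hfib : ∀ b b', P b → P b' → Nat.card {a // f a = b} = Nat.card {a // f a = b'})
    {s : ℝ} (hs : s * Nat.card α ≤ Nat.card {a // G a}) :
    s * Nat.card {b // P b} ≤ Nat.card {b // Q b} := by
  have hα : (0 : ℝ) < Nat.card α := by exact_mod_cast Nat.card_pos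
  have key : (Nat.card {a // G a} * Nat.card {b // P b} : ℝ) ≤
      Nat.card {b // Q b} * Nat.card α := by
    exact_mod_cast card_mul_card_le_card_mul_card_of_card_fiber_eq f hG hQ hfib
  refine le_of_mul_le_mul_right ?_ hα
  calc s * Nat.card {b // P b} * Nat.card α = s * Nat.card α * Nat.card {b // P b} := by ring
    _ ≤ Nat.card {a // G a} * Nat.card {b // P b} := by gcongr
    _ ≤ Nat.card {b // Q b} * Nat.card α := key

end DoubleCounting

section GeomSum

variable {R : Type*} [Field R] [LinearOrder R] [IsStrictOrderedRing R] {q : R}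

theorem geom_sum_range_succ_le_two_mul_pow (hq : 2 ≤ q) (k : ℕ) :
    ∑ j ∈ Finset.range (k + 1), q ^ j ≤ 2 * q ^ k := by
  induction k with
  | zero => simp
  | succ k ih =>
    rw [Finset.sum_range_succ, pow_succ]
    nlinarith [mul_nonneg (pow_nonneg (zero_le_two.trans hq) k) (sub_nonneg.2 hq)]

theorem sum_range_succ_pow_div_pow_le (hq : 2 ≤ q) (d e k : ℕ) :
    ∑ j ∈ Finset.range (k + 1), q ^ (d + j) / q ^ (e + d + k) ≤ 2 / q ^ e := by
  have hq0 : 0 < q := zero_lt_two.trans_le hq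
  simp_rw [← Finset.sum_div, pow_add q d, ← Finset.mul_sum]
  rw [div_le_div_iff₀ (by positivity) (by positivity)]
  calc q ^ d * (∑ j ∈ Finset.range (k + 1), q ^ j) * q ^ e ≤ q ^ d * (2 * q ^ k) * q ^ e := by
        gcongr
        exact geom_sum_range_succ_le_two_mul_pow hq k
    _ = 2 * q ^ (e + d + k) := by ring

end GeomSum

theorem Fin.range_append {α : Type*} {m₁ m₂ : ℕ} (a : Fin m₁ → α) (b : Fin m₂ → α) :
    range (Fin.append a b) = range a ∪ range b := by
  ext x
  constructor
  · rintro ⟨i, rfl⟩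
    induction i using Fin.addCases <;> simp
  · rintro (⟨i, rfl⟩ | ⟨i, rfl⟩)
    · exact ⟨Fin.castAdd m₂ i, Fin.append_left a b i⟩
    · exact ⟨Fin.natAdd m₁ i, Fin.append_right a b i⟩

namespace AffineSubspace

variable {k V P : Type*} [Field k] [AddCommGroup V] [Module k V] [AddTorsor V P]

theorem affineSpan_range_coe_eq_iff {s : AffineSubspace k P} [Nonempty s]
    {ι : Type*} (g : ι → s) :
    affineSpan k (range fun i => (g i : P)) = s ↔ affineSpan k (range g) = ⊤ := by
  rw [show (range fun i => (g i : P)) = s.subtype '' range g from range_comp _ _, ← map_span]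
  constructor
  · intro h
    rw [← comap_map_eq_of_injective s.subtype_injective (affineSpan k (range g)), h]
    ext x
    simp
  · intro h
    rw [h]
    ext x
    simp

def spanningFamilyEquiv (s : AffineSubspace k P) [Nonempty s] (ι : Type*) :
    {a : ι → P // affineSpan k (range a) = s} ≃ {g : ι → s // affineSpan k (range g) = ⊤} where
  toFun a := ⟨fun i => ⟨a.1 i, a.2.le (mem_affineSpan k (mem_range_self i))⟩,
    (affineSpan_range_coe_eq_iff _).1 a.2⟩
  invFun g := ⟨fun i => g.1 i, (affineSpan_range_coe_eq_iff g.1).2 g.2⟩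
  left_inv _ := rfl
  right_inv _ := rfl

variable [FiniteDimensional k V]

theorem finrank_direction_sup_le {s₁ s₂ : AffineSubspace k P} (h₁ : (s₁ : Set P).Nonempty)
    (h₂ : (s₂ : Set P).Nonempty) :
    finrank k (s₁ ⊔ s₂).direction ≤ finrank k s₁.direction + finrank k s₂.direction + 1 := by
  obtain ⟨p₁, hp₁⟩ := h₁
  obtain ⟨p₂, hp₂⟩ := h₂
  rw [direction_sup hp₁ hp₂]
  calc _ ≤ finrank k ↥(s₁.direction ⊔ s₂.direction) + finrank k (Submodule.span k {p₂ -ᵥ p₁}) :=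
        Submodule.finrank_add_le_finrank_add_finrank _ _
    _ ≤ finrank k s₁.direction + finrank k s₂.direction + 1 := by
        gcongr
        · exact Submodule.finrank_add_le_finrank_add_finrank _ _
        · simpa using finrank_span_le_card ({p₂ -ᵥ p₁} : Set V)

theorem finrank_direction_sup_affineSpan_singleton {s : AffineSubspace k P}
    (hs : (s : Set P).Nonempty) {p : P} (hp : p ∉ s) :
    finrank k (s ⊔ affineSpan k {p}).direction = finrank k s.direction + 1 := by
  obtain ⟨p₀, hp₀⟩ := hs
  rw [direction_sup hp₀ (mem_affineSpan k (mem_singleton p)), direction_affineSpan,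
    vectorSpan_singleton, sup_bot_eq, Submodule.finrank_sup_span_singleton]
  rwa [vsub_right_mem_direction_iff_mem hp₀]

theorem natCard_eq_pow_finrank_direction {s : AffineSubspace k P}
    (hs : (s : Set P).Nonempty) : Nat.card s = Nat.card k ^ finrank k s.direction := by
  have := hs.to_subtype
  obtain ⟨p, hp⟩ := hs
  rw [← Nat.card_congr (Equiv.vaddConst (⟨p, hp⟩ : s)), Module.natCard_eq_pow_finrank (K := k)]

theorem card_affineSpan_range_eq_of_finrank_eq (ι : Type*)
    {s s' : AffineSubspace k P} (hs : (s : Set P).Nonempty) (hs' : (s' : Set P).Nonempty)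
    (h : finrank k s.direction = finrank k s'.direction) :
    Nat.card {a : ι → P // affineSpan k (range a) = s} =
      Nat.card {a : ι → P // affineSpan k (range a) = s'} := by
  have := hs.to_subtype
  have := hs'.to_subtype
  obtain ⟨p, hp⟩ := hs
  obtain ⟨p', hp'⟩ := hs'
  let e : s ≃ᵃ[k] s' := (AffineEquiv.vaddConst k (⟨p, hp⟩ : s)).symm.trans
    ((LinearEquiv.ofFinrankEq _ _ h).toAffineEquiv.trans (AffineEquiv.vaddConst k ⟨p', hp'⟩))
  refine Nat.card_congr <| (s.spanningFamilyEquiv ι).trans <|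
    ((Equiv.piCongrRight fun _ => e.toEquiv).subtypeEquiv fun g => ?_).trans
      (s'.spanningFamilyEquiv ι).symm
  rw [e.span_eq_top_iff, ← range_comp]
  rfl

end AffineSubspace

section AffineIndependentOver

variable {k V P : Type*} [Field k] [AddCommGroup V] [Module k V] [AddTorsor V P]

/-- By `affineIndependentOver_snoc_iff`, this says that every `p i` lies outside the affine span
of `u` and the points `p j` with `j < i`. -/
def AffineIndependentOver (u : AffineSubspace k P) {m : ℕ} (p : Fin m → P) : Prop :=
  finrank k (u ⊔ affineSpan k (range p)).direction = finrank k u.direction + m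

variable [FiniteDimensional k V]

theorem finrank_direction_sup_affineSpan_range_le {u : AffineSubspace k P}
    (hu : (u : Set P).Nonempty) {m : ℕ} (p : Fin m → P) :
    finrank k (u ⊔ affineSpan k (range p)).direction ≤ finrank k u.direction + m := by
  cases m with
  | zero =>
    rw [range_eq_empty p, span_empty, sup_bot_eq]
    rfl
  | succ m =>
    have hp : (affineSpan k (range p) : Set P).Nonempty :=
      (affineSpan_nonempty k).2 (range_nonempty p)
    have hsup := finrank_direction_sup_le hu hp
    have hspan := finrank_vectorSpan_range_le k p (Fintype.card_fin _)
    rw [direction_affineSpan] at hsup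
    omega

theorem affineIndependentOver_snoc_iff {u : AffineSubspace k P} (hu : (u : Set P).Nonempty)
    {m : ℕ} {p : Fin m → P} {x : P} :
    AffineIndependentOver u (Fin.snoc p x : Fin (m + 1) → P) ↔
      AffineIndependentOver u p ∧ x ∉ u ⊔ affineSpan k (range p) := by
  have hsnoc : u ⊔ affineSpan k (range (Fin.snoc p x : Fin (m + 1) → P)) =
      u ⊔ affineSpan k (range p) ⊔ affineSpan k {x} := by
    rw [Fin.range_snoc, insert_eq, span_union, sup_comm (affineSpan k {x}), sup_assoc]
  unfold AffineIndependentOver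
  rw [hsnoc]
  by_cases hx : x ∈ u ⊔ affineSpan k (range p)
  · rw [sup_eq_left.2 (affineSpan_le.2 (singleton_subset_iff.2 hx))]
    have := finrank_direction_sup_affineSpan_range_le hu p
    simp only [hx, not_true_eq_false, and_false, iff_false]
    omega
  · rw [finrank_direction_sup_affineSpan_singleton (hu.mono (le_sup_left : u ≤ _)) hx]
    simp only [hx, not_false_eq_true, and_true]
    omega

theorem affineIndependentOver_iff_init {u : AffineSubspace k P} (hu : (u : Set P).Nonempty)
    {m : ℕ} {q : Fin (m + 1) → P} :
    AffineIndependentOver u q ↔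
      AffineIndependentOver u (Fin.init q) ∧
        q (Fin.last m) ∉ u ⊔ affineSpan k (range (Fin.init q)) := by
  rw [← affineIndependentOver_snoc_iff hu, Fin.snoc_init_self]

theorem finrank_direction_of_affineIndependentOver_append {u : AffineSubspace k P}
    (hu : (u : Set P).Nonempty) {m₁ m₂ : ℕ} {a : Fin (m₁ + 1) → P} {b : Fin (m₂ + 1) → P}
    (h : AffineIndependentOver u (Fin.append a b)) :
    finrank k (affineSpan k (range a)).direction = m₁ ∧
      finrank k (affineSpan k (range b)).direction = m₂ ∧
      finrank k (affineSpan k ((affineSpan k (range a) : Set P) ∪ affineSpan k (range b) ∪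
        u)).direction = m₁ + m₂ + finrank k u.direction + 2 := by
  have hA := finrank_vectorSpan_range_le k a (Fintype.card_fin _)
  have hB := finrank_vectorSpan_range_le k b (Fintype.card_fin _)
  have hAne : (affineSpan k (range a) : Set P).Nonempty :=
    (affineSpan_nonempty k).2 (range_nonempty a)
  have hBne : (affineSpan k (range b) : Set P).Nonempty :=
    (affineSpan_nonempty k).2 (range_nonempty b)
  have huA := finrank_direction_sup_le hu hAne
  have huAB := finrank_direction_sup_le
    (hu.mono (le_sup_left : u ≤ u ⊔ affineSpan k (range a))) hBne
  unfold AffineIndependentOver at h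
  rw [Fin.range_append, span_union, ← sup_assoc] at h
  rw [span_union, span_union, affineSpan_coe, affineSpan_coe, affineSpan_coe, sup_comm _ u,
    ← sup_assoc]
  rw [← direction_affineSpan] at hA hB
  omega

theorem card_affineIndependentOver_succ_add [Finite P] {u : AffineSubspace k P}
    (hu : (u : Set P).Nonempty) (m : ℕ) :
    Nat.card {q : Fin (m + 1) → P // AffineIndependentOver u q} +
        Nat.card {p : Fin m → P // AffineIndependentOver u p} *
          Nat.card k ^ (finrank k u.direction + m) =
      Nat.card {p : Fin m → P // AffineIndependentOver u p} * Nat.card P := by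
  classical
  let G := {p : Fin m → P // AffineIndependentOver u p}
  let W : G → AffineSubspace k P := fun p => u ⊔ affineSpan k (range p.1)
  let e : {q : Fin (m + 1) → P // AffineIndependentOver u q} ≃ Σ p : G, ↥((W p : Set P)ᶜ) :=
    { toFun q := ⟨⟨Fin.init q.1, ((affineIndependentOver_iff_init hu).1 q.2).1⟩,
        ⟨q.1 (Fin.last m), ((affineIndependentOver_iff_init hu).1 q.2).2⟩⟩
      invFun x := ⟨Fin.snoc x.1.1 x.2.1, (affineIndependentOver_snoc_iff hu).2 ⟨x.1.2, x.2.2⟩⟩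
      left_inv q := Subtype.ext (Fin.snoc_init_self q.1)
      right_inv x := Sigma.subtype_ext (Subtype.ext (by simp)) (by simp) }
  have hfiber (p : G) : Nat.card ↥((W p : Set P)ᶜ) + Nat.card k ^ (finrank k u.direction + m) =
      Nat.card P := by
    rw [← p.2, ← natCard_eq_pow_finrank_direction (hu.mono (le_sup_left : u ≤ W p)),
      Nat.card_coe_set_eq]
    exact ncard_compl_add_ncard _
  have := Fintype.ofFinite G
  rw [Nat.card_congr e, Nat.card_sigma, Nat.card_eq_fintype_card (α := G), ← smul_eq_mul,
    ← smul_eq_mul, ← Finset.card_univ, ← Finset.sum_const, ← Finset.sum_const,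
    ← Finset.sum_add_distrib]
  exact Finset.sum_congr rfl fun p _ => hfiber p

theorem le_card_affineIndependentOver [Finite P] {u : AffineSubspace k P}
    (hu : (u : Set P).Nonempty) (m : ℕ) :
    (1 - ∑ j ∈ Finset.range m, (Nat.card k : ℝ) ^ (finrank k u.direction + j) / Nat.card P) *
        (Nat.card P : ℝ) ^ m ≤ Nat.card {p : Fin m → P // AffineIndependentOver u p} := by
  induction m with
  | zero =>
    have hall (p : Fin 0 → P) : AffineIndependentOver u p := by
      rw [AffineIndependentOver, range_eq_empty p, span_empty, sup_bot_eq]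
      rfl
    simp [Nat.card_congr (Equiv.subtypeUnivEquiv hall)]
  | succ m ih =>
    have : Nonempty P := ⟨hu.some⟩
    have hN : (0 : ℝ) < Nat.card P := by exact_mod_cast Nat.card_pos
    have hrec := card_affineIndependentOver_succ_add hu m
    have hle : (Nat.card {p : Fin m → P // AffineIndependentOver u p} : ℝ) ≤ Nat.card P ^ m := by
      exact_mod_cast (Finite.card_subtype_le _).trans_eq (by rw [Nat.card_fun, Nat.card_fin])
    set g := (Nat.card {p : Fin m → P // AffineIndependentOver u p} : ℝ)
    set c := (Nat.card k : ℝ) ^ (finrank k u.direction + m)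
    set S := ∑ j ∈ Finset.range m, (Nat.card k : ℝ) ^ (finrank k u.direction + j) / Nat.card P
    have hrec' : (Nat.card {q : Fin (m + 1) → P // AffineIndependentOver u q} : ℝ) + g * c =
        g * Nat.card P := by
      have := congrArg (Nat.cast : ℕ → ℝ) hrec
      push_cast at this
      linarith
    rw [Finset.sum_range_succ]
    calc (1 - (S + c / Nat.card P)) * (Nat.card P : ℝ) ^ (m + 1)
        = (1 - S) * Nat.card P ^ m * Nat.card P - c * Nat.card P ^ m := by
          field_simp
          ring
      _ ≤ g * Nat.card P - c * g := by gcongr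
      _ = _ := by linarith

theorem le_card_affineIndependentOver_append [Fintype k] [Finite P] {u : AffineSubspace k P}
    (hu : (u : Set P).Nonempty) {n l₁ l₂ : ℕ} (hP : Nat.card P = Fintype.card k ^ n)
    (hn : l₁ + l₂ + finrank k u.direction + 1 ≤ n) :
    (1 - 2 / (Fintype.card k : ℝ) ^ (n - l₁ - l₂ - finrank k u.direction - 1)) *
        Nat.card ((Fin (l₁ + 1) → P) × (Fin (l₂ + 1) → P)) ≤
      Nat.card {x : (Fin (l₁ + 1) → P) × (Fin (l₂ + 1) → P) //
        AffineIndependentOver u (Fin.append x.1 x.2)} := by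
  set d := finrank k u.direction
  set q := Fintype.card k
  have hq : (2 : ℝ) ≤ q := by exact_mod_cast Fintype.one_lt_card
  have hsum : ∑ j ∈ Finset.range (l₁ + 1 + (l₂ + 1)), (Nat.card k : ℝ) ^ (d + j) / Nat.card P ≤
      2 / (q : ℝ) ^ (n - l₁ - l₂ - d - 1) := by
    obtain ⟨e, rfl⟩ : ∃ e, n = e + d + (l₁ + l₂ + 1) := ⟨n - l₁ - l₂ - d - 1, by omega⟩
    rw [show e + d + (l₁ + l₂ + 1) - l₁ - l₂ - d - 1 = e by omega, hP, Nat.card_eq_fintype_card,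
      Nat.cast_pow, show l₁ + 1 + (l₂ + 1) = l₁ + l₂ + 1 + 1 by ring]
    exact sum_range_succ_pow_div_pow_le hq _ _ _
  have hpairs : Nat.card ((Fin (l₁ + 1) → P) × (Fin (l₂ + 1) → P)) =
      Nat.card P ^ (l₁ + 1 + (l₂ + 1)) := by
    rw [Nat.card_prod, Nat.card_fun, Nat.card_fun, Nat.card_fin, Nat.card_fin, ← pow_add]
  calc _ ≤ (1 - ∑ j ∈ Finset.range (l₁ + 1 + (l₂ + 1)), (Nat.card k : ℝ) ^ (d + j) / Nat.card P) *
          (Nat.card P : ℝ) ^ (l₁ + 1 + (l₂ + 1)) := by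
        rw [hpairs, Nat.cast_pow]
        exact mul_le_mul_of_nonneg_right (by linarith) (by positivity)
    _ ≤ _ := le_card_affineIndependentOver hu _
    _ = _ := by
        exact_mod_cast Nat.card_congr
          ((Fin.appendEquiv _ _).subtypeEquiv (q := AffineIndependentOver u) fun _ => Iff.rfl).symm

end AffineIndependentOver

/-- **Complement walk counting in the affine Grassmann poset.** Over `F = F_q`, fix an
affine subspace `u ⊆ F^n` of dimension `ℓ₃` and suppose `ℓ₁ + ℓ₂ + ℓ₃ + 3 ≤ n`. Among all
pairs `(w₁, w₂)` of affine subspaces of dimensions `ℓ₁` and `ℓ₂` (chosen independently and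
uniformly), the fraction with `dim(span(w₁, w₂, u)) = ℓ₁ + ℓ₂ + ℓ₃ + 2` is at least
`1 − 2/q^{n−ℓ₁−ℓ₂−ℓ₃−1}`. -/
theorem affine_grassmann_complement_probability
    (F : Type*) [Field F] [Fintype F] (n l1 l2 l3 : ℕ)
    (hn : l1 + l2 + l3 + 3 ≤ n)
    (u : AffineSubspace F (Fin n → F))
    (hu : (u : Set (Fin n → F)).Nonempty)
    (hud : Module.finrank F u.direction = l3) :
    (1 - 2 / (Fintype.card F : ℝ) ^ (n - l1 - l2 - l3 - 1)) *
        (Nat.card {p : AffineSubspace F (Fin n → F) × AffineSubspace F (Fin n → F) //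
          ((p.1 : Set (Fin n → F)).Nonempty ∧ Module.finrank F p.1.direction = l1) ∧
          ((p.2 : Set (Fin n → F)).Nonempty ∧ Module.finrank F p.2.direction = l2)} : ℝ) ≤
      (Nat.card {p : AffineSubspace F (Fin n → F) × AffineSubspace F (Fin n → F) //
          (((p.1 : Set (Fin n → F)).Nonempty ∧ Module.finrank F p.1.direction = l1) ∧
           ((p.2 : Set (Fin n → F)).Nonempty ∧ Module.finrank F p.2.direction = l2)) ∧
          Module.finrank F
            (affineSpan F ((p.1 : Set (Fin n → F)) ∪ (p.2 : Set (Fin n → F)) ∪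
              (u : Set (Fin n → F)))).direction = l1 + l2 + l3 + 2} : ℝ) := by
  have : Finite (AffineSubspace F (Fin n → F)) := Finite.of_injective _ SetLike.coe_injective
  refine mul_card_le_card_of_card_fiber_eq
    (Prod.map (fun a : Fin (l1 + 1) → Fin n → F => affineSpan F (range a))
      (fun b : Fin (l2 + 1) → Fin n → F => affineSpan F (range b)))
    (G := fun x => AffineIndependentOver u (Fin.append x.1 x.2)) ?_ (fun _ h => h.1) ?_ ?_
  · rintro ⟨a, b⟩ h
    obtain ⟨ha, hb, hab⟩ := finrank_direction_of_affineIndependentOver_append hu h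
    refine ⟨⟨⟨(affineSpan_nonempty F).2 (range_nonempty a), ha⟩,
      ⟨(affineSpan_nonempty F).2 (range_nonempty b), hb⟩⟩, ?_⟩
    rw [← hud]
    exact hab
  · rintro ⟨w₁, w₂⟩ ⟨w₁', w₂'⟩ ⟨⟨h₁, d₁⟩, h₂, d₂⟩ ⟨⟨h₁', d₁'⟩, h₂', d₂'⟩
    rw [card_fiber_prodMap, card_fiber_prodMap,
      card_affineSpan_range_eq_of_finrank_eq _ h₁ h₁' (d₁.trans d₁'.symm),
      card_affineSpan_range_eq_of_finrank_eq _ h₂ h₂' (d₂.trans d₂'.symm)]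
  · have hcard : Nat.card (Fin n → F) = Fintype.card F ^ n := by
      rw [Nat.card_fun, Nat.card_fin, Nat.card_eq_fintype_card]
    have := le_card_affineIndependentOver_append hu hcard (l₁ := l1) (l₂ := l2) (by omega)
    rwa [hud] at this
end

section
/- Let X = (S,T,A,V) be a STAV structure with an STS distribution D₁ in which, given t, the sets s₁, s₂ are chosen independently, and another STS distribution D₂ on the same STAV such that for every t ∈ T the STS_t-graph of D₂ is a (1/3)-edge expander. Let f be any ensemble of local functions and ε_i = rej_{D_i}(f) the probability that f_{s₁}|_t ≠ f_{s₂}|_t when sampling from D_i. Then (1/6)·ε₁ ≤ ε₂ ≤ 6·ε₁. -/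
open Finset
open scoped Classical

/-- `c`-edge expander (scale-invariant formulation for a possibly unnormalized weight
function): every vertex set of at most half of the total mass has crossing edge mass at
least `c` times its mass. -/
def EdgeExpander {α : Type*} [Fintype α] (w : α → α → ℝ) (c : ℝ) : Prop :=
  ∀ S : Finset α, 0 < ∑ v ∈ S, ∑ u, w v u →
    2 * (∑ v ∈ S, ∑ u, w v u) ≤ ∑ v, ∑ u, w v u →
    c * (∑ v ∈ S, ∑ u, w v u) ≤ ∑ v ∈ S, ∑ u ∈ Sᶜ, w v u

section Aux
variable {α : Type*} [Fintype α]

lemma cut_symm (w : α → α → ℝ) (hsym : ∀ a b, w a b = w b a) (C : Finset α) :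
    ∑ a ∈ C, ∑ b ∈ Cᶜ, w a b = ∑ a ∈ Cᶜ, ∑ b ∈ C, w a b := by
  rw [Finset.sum_comm]
  exact Finset.sum_congr rfl fun a _ => Finset.sum_congr rfl fun b _ => hsym b a

lemma cut_compare (w1 w2 : α → α → ℝ)
    (h1 : ∀ a b, 0 ≤ w1 a b) (h2 : ∀ a b, 0 ≤ w2 a b)
    (hsym1 : ∀ a b, w1 a b = w1 b a) (hsym2 : ∀ a b, w2 a b = w2 b a)
    (hrow : ∀ a, ∑ b, w1 a b = ∑ b, w2 a b)
    (hind : ∀ a b, w1 a b * (∑ x, ∑ y, w1 x y) = (∑ y, w1 a y) * (∑ x, w1 x b))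
    (hexp : (0 < ∑ x, ∑ y, w2 x y) → EdgeExpander w2 (1/3))
    (C : Finset α) :
    (∑ a ∈ C, ∑ b ∈ Cᶜ, w1 a b ≤ 3 * ∑ a ∈ C, ∑ b ∈ Cᶜ, w2 a b) ∧
    (∑ a ∈ C, ∑ b ∈ Cᶜ, w2 a b ≤ 2 * ∑ a ∈ C, ∑ b ∈ Cᶜ, w1 a b) := by
  set m : α → ℝ := fun a => ∑ b, w2 a b with hm
  have hmnn : ∀ a, 0 ≤ m a := fun a => Finset.sum_nonneg fun b _ => h2 a b
  set M : ℝ := ∑ a, m a with hMdef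
  have hM2 : ∑ x, ∑ y, w2 x y = M := rfl
  have hM1 : ∑ x, ∑ y, w1 x y = M := Finset.sum_congr rfl fun a _ => hrow a
  set A := ∑ a ∈ C, m a with hAdef
  set B := ∑ a ∈ Cᶜ, m a with hBdef
  have hAB : A + B = M := Finset.sum_add_sum_compl C m
  have hA0 : 0 ≤ A := Finset.sum_nonneg fun a _ => hmnn a
  have hB0 : 0 ≤ B := Finset.sum_nonneg fun a _ => hmnn a
  set c1 := ∑ a ∈ C, ∑ b ∈ Cᶜ, w1 a b with hc1def
  set c2 := ∑ a ∈ C, ∑ b ∈ Cᶜ, w2 a b with hc2def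
  have hc10 : 0 ≤ c1 := Finset.sum_nonneg fun a _ => Finset.sum_nonneg fun b _ => h1 a b
  have hc20 : 0 ≤ c2 := Finset.sum_nonneg fun a _ => Finset.sum_nonneg fun b _ => h2 a b
  have hc2A : c2 ≤ A := by
    refine Finset.sum_le_sum fun a _ => ?_
    exact Finset.sum_le_sum_of_subset_of_nonneg (Finset.subset_univ _)
      (fun b _ _ => h2 a b)
  have hc2sym : c2 = ∑ a ∈ Cᶜ, ∑ b ∈ (Cᶜ)ᶜ, w2 a b := by
    rw [compl_compl]; exact cut_symm w2 hsym2 C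
  have hc2B : c2 ≤ B := by
    rw [hc2sym]
    refine Finset.sum_le_sum fun a _ => ?_
    exact Finset.sum_le_sum_of_subset_of_nonneg (Finset.subset_univ _)
      (fun b _ _ => h2 a b)
  have hrow' : ∀ a, ∑ y, w1 a y = m a := fun a => hrow a
  have hcol' : ∀ b, ∑ x, w1 x b = m b := by
    intro b
    rw [show (∑ x, w1 x b) = ∑ x, w1 b x from
      Finset.sum_congr rfl fun x _ => hsym1 x b]
    exact hrow b
  have key1 : c1 * M = A * B := by
    calc c1 * M = ∑ a ∈ C, ∑ b ∈ Cᶜ, w1 a b * M := by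
          rw [Finset.sum_mul]
          exact Finset.sum_congr rfl fun a _ => Finset.sum_mul _ _ _
      _ = ∑ a ∈ C, ∑ b ∈ Cᶜ, m a * m b := by
          refine Finset.sum_congr rfl fun a _ => Finset.sum_congr rfl fun b _ => ?_
          rw [← hM1, hind a b, hrow' a, hcol' b]
      _ = A * B := by rw [Finset.sum_mul_sum]
  by_cases hM : M = 0
  · have hMz : ∑ a, m a = 0 := by rw [← hMdef]; exact hM
    have hm0 : ∀ a, m a = 0 := fun a =>
      (Finset.sum_eq_zero_iff_of_nonneg (fun a _ => hmnn a)).1 hMz a (Finset.mem_univ a)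
    have hw2 : ∀ a b, w2 a b = 0 := by
      intro a b
      exact (Finset.sum_eq_zero_iff_of_nonneg (fun b _ => h2 a b)).1 (hm0 a) b (Finset.mem_univ b)
    have hw1 : ∀ a b, w1 a b = 0 := by
      intro a b
      have : ∑ y, w1 a y = 0 := by rw [hrow' a, hm0 a]
      exact (Finset.sum_eq_zero_iff_of_nonneg (fun b _ => h1 a b)).1 this b (Finset.mem_univ b)
    have e1 : c1 = 0 := Finset.sum_eq_zero fun a _ => Finset.sum_eq_zero fun b _ => hw1 a b
    have e2 : c2 = 0 := Finset.sum_eq_zero fun a _ => Finset.sum_eq_zero fun b _ => hw2 a b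
    rw [e1, e2]; norm_num
  · have hMpos : 0 < M := lt_of_le_of_ne (hAB ▸ add_nonneg hA0 hB0) (Ne.symm hM)
    have hexp' : EdgeExpander w2 (1/3) := hexp (hM2 ▸ hMpos)
    constructor
    · -- c1 ≤ 3 c2
      rcases le_or_gt (2 * A) M with hle | hgt
      · rcases eq_or_lt_of_le hA0 with hA | hA
        · have : c1 * M = 0 := by rw [key1, ← hA]; ring
          have hc1z : c1 = 0 := by
            rcases mul_eq_zero.1 this with h | h
            · exact h
            · exact absurd h hM
          rw [hc1z]; linarith
        · have hmass : ∑ v ∈ C, ∑ u, w2 v u = A := rfl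
          have hcut : (1/3 : ℝ) * A ≤ c2 := by
            rw [hc2def, ← hmass]
            exact hexp' C (by rw [hmass]; exact hA) (by rw [hmass, hM2]; exact hle)
          have hc1A : c1 ≤ A := by
            have hBM : B ≤ M := by linarith
            have : c1 * M ≤ A * M := by
              rw [key1]; exact mul_le_mul_of_nonneg_left hBM hA0
            exact le_of_mul_le_mul_right this hMpos
          linarith
      · have h2B : 2 * B ≤ M := by linarith
        rcases eq_or_lt_of_le hB0 with hB | hB
        · have : c1 * M = 0 := by rw [key1, ← hB]; ring
          have hc1z : c1 = 0 := by
            rcases mul_eq_zero.1 this with h | h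
            · exact h
            · exact absurd h hM
          rw [hc1z]; linarith
        · have hmass : ∑ v ∈ Cᶜ, ∑ u, w2 v u = B := rfl
          have hcut : (1/3 : ℝ) * B ≤ c2 := by
            rw [hc2sym, ← hmass]
            exact hexp' Cᶜ (by rw [hmass]; exact hB) (by rw [hmass, hM2]; exact h2B)
          have hc1B : c1 ≤ B := by
            have hAM : A ≤ M := by linarith
            have : c1 * M ≤ B * M := by
              rw [key1]
              calc A * B = B * A := mul_comm _ _
                _ ≤ B * M := mul_le_mul_of_nonneg_left hAM hB0
            exact le_of_mul_le_mul_right this hMpos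
          linarith
    · -- c2 ≤ 2 c1
      have h1 : c2 * A ≤ B * A := mul_le_mul_of_nonneg_right hc2B hA0
      have h2 : c2 * B ≤ A * B := mul_le_mul_of_nonneg_right hc2A hB0
      have : c2 * M ≤ (2 * c1) * M := by
        rw [show (2 * c1) * M = 2 * (c1 * M) by ring, key1]
        nlinarith
      exact le_of_mul_le_mul_right this hMpos



lemma inner_cut (w : α → α → ℝ) {β : Type*} (g : α → β) (a : α) :
    ∑ b, w a b * (if g a ≠ g b then 1 else 0) =
      ∑ b ∈ (Finset.univ.filter (fun x => g x = g a))ᶜ, w a b := by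
  rw [Finset.compl_filter, Finset.sum_filter]
  refine Finset.sum_congr rfl fun b _ => ?_
  by_cases h : g a = g b
  · simp [h]
  · simp [h, Ne.symm h]

lemma eps_compare {β : Type*} (w1 w2 : α → α → ℝ) (g : α → β)
    (h1 : ∀ a b, 0 ≤ w1 a b) (h2 : ∀ a b, 0 ≤ w2 a b)
    (hsym1 : ∀ a b, w1 a b = w1 b a) (hsym2 : ∀ a b, w2 a b = w2 b a)
    (hrow : ∀ a, ∑ b, w1 a b = ∑ b, w2 a b)
    (hind : ∀ a b, w1 a b * (∑ x, ∑ y, w1 x y) = (∑ y, w1 a y) * (∑ x, w1 x b))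
    (hexp : (0 < ∑ x, ∑ y, w2 x y) → EdgeExpander w2 (1/3)) :
    (∑ a, ∑ b, w1 a b * (if g a ≠ g b then 1 else 0) ≤
      3 * ∑ a, ∑ b, w2 a b * (if g a ≠ g b then 1 else 0)) ∧
    (∑ a, ∑ b, w2 a b * (if g a ≠ g b then 1 else 0) ≤
      2 * ∑ a, ∑ b, w1 a b * (if g a ≠ g b then 1 else 0)) := by
  have key : ∀ w : α → α → ℝ,
      (∑ a, ∑ b, w a b * (if g a ≠ g b then 1 else 0)) =
      ∑ c ∈ Finset.univ.image g, ∑ a ∈ Finset.univ.filter (fun x => g x = c),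
        ∑ b ∈ (Finset.univ.filter (fun x => g x = c))ᶜ, w a b := by
    intro w
    rw [← Finset.sum_fiberwise_of_maps_to
      (fun a _ => Finset.mem_image_of_mem g (Finset.mem_univ a))
      (fun a => ∑ b, w a b * (if g a ≠ g b then 1 else 0))]
    refine Finset.sum_congr rfl fun c _ => Finset.sum_congr rfl fun a ha => ?_
    have hga : g a = c := (Finset.mem_filter.1 ha).2
    rw [inner_cut w g a, hga]
  constructor
  · rw [key w1, key w2, Finset.mul_sum]
    refine Finset.sum_le_sum fun c _ => ?_
    exact (cut_compare w1 w2 h1 h2 hsym1 hsym2 hrow hind hexp _).1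
  · rw [key w1, key w2, Finset.mul_sum]
    refine Finset.sum_le_sum fun c _ => ?_
    exact (cut_compare w1 w2 h1 h2 hsym1 hsym2 hrow hind hexp _).2


end Aux

set_option maxHeartbeats 1000000 in
/-- **Independent choice vs. expanding choice.** Let `X = (S,T,A,V)` be a STAV structure
and let `D₁, D₂` be two STS distributions on it with the same `(s,t)`-marginals, such that
under `D₁` the sets `s₁, s₂` are chosen independently given `t`, and for every `t ∈ T` the
`STS_t`-graph of `D₂` is a `(1/3)`-edge expander. Then for every ensemble `f`, the
rejection probabilities `εᵢ = rej_{Dᵢ}(f)` satisfy `(1/6)·ε₁ ≤ ε₂ ≤ 6·ε₁`. -/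
theorem independent_vs_expanding_sts
    (V : Type*) [Fintype V] [DecidableEq V] (Alph : Type*)
    (S T : Finset (Finset V))
    (D1 D2 : Finset V → Finset V → Finset V → ℝ)
    (h1nn : ∀ s1 t s2, 0 ≤ D1 s1 t s2) (h2nn : ∀ s1 t s2, 0 ≤ D2 s1 t s2)
    (h1tot : ∑ s1, ∑ t, ∑ s2, D1 s1 t s2 = 1)
    (h2tot : ∑ s1, ∑ t, ∑ s2, D2 s1 t s2 = 1)
    (h1sym : ∀ s1 t s2, D1 s1 t s2 = D1 s2 t s1)
    (h2sym : ∀ s1 t s2, D2 s1 t s2 = D2 s2 t s1)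
    (h1supp : ∀ s1 t s2, D1 s1 t s2 ≠ 0 →
      t ∈ T ∧ s1 ∈ S ∧ s2 ∈ S ∧ t ⊆ s1 ∧ t ⊆ s2)
    (h2supp : ∀ s1 t s2, D2 s1 t s2 ≠ 0 →
      t ∈ T ∧ s1 ∈ S ∧ s2 ∈ S ∧ t ⊆ s1 ∧ t ⊆ s2)
    -- the two STS distributions have the same `(s,t)`-marginals
    (hmarg : ∀ s1 t, ∑ s2, D1 s1 t s2 = ∑ s2, D2 s1 t s2)
    -- under `D₁`, the sets `s₁,s₂` are independent given `t`
    (hindep : ∀ s1 t s2,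
      D1 s1 t s2 * (∑ s1', ∑ s2', D1 s1' t s2') =
        (∑ s2', D1 s1 t s2') * (∑ s1', D1 s1' t s2))
    -- for every `t ∈ T`, the `STS_t`-graph of `D₂` is a `(1/3)`-edge expander
    (hexp : ∀ t ∈ T, EdgeExpander (fun s1 s2 => D2 s1 t s2) (1 / 3))
    (f : Finset V → V → Alph) :
    (1 / 6) * (∑ s1, ∑ t, ∑ s2, D1 s1 t s2 *
        (if ∃ v ∈ t, f s1 v ≠ f s2 v then 1 else 0)) ≤
      (∑ s1, ∑ t, ∑ s2, D2 s1 t s2 *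
        (if ∃ v ∈ t, f s1 v ≠ f s2 v then 1 else 0)) ∧
    (∑ s1, ∑ t, ∑ s2, D2 s1 t s2 *
        (if ∃ v ∈ t, f s1 v ≠ f s2 v then 1 else 0)) ≤
      6 * (∑ s1, ∑ t, ∑ s2, D1 s1 t s2 *
        (if ∃ v ∈ t, f s1 v ≠ f s2 v then 1 else 0)) := by
  -- reorder sums so that `t` is outermost
  have hswap : ∀ D : Finset V → Finset V → Finset V → ℝ,
      (∑ s1, ∑ t, ∑ s2, D s1 t s2 * (if ∃ v ∈ t, f s1 v ≠ f s2 v then 1 else 0)) =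
      ∑ t, ∑ s1, ∑ s2, D s1 t s2 * (if ∃ v ∈ t, f s1 v ≠ f s2 v then 1 else 0) :=
    fun D => Finset.sum_comm
  rw [hswap D1, hswap D2]
  -- per-`t` comparison
  have hpt : ∀ t : Finset V,
      ((∑ s1, ∑ s2, D1 s1 t s2 * (if ∃ v ∈ t, f s1 v ≠ f s2 v then 1 else 0)) ≤
        3 * ∑ s1, ∑ s2, D2 s1 t s2 * (if ∃ v ∈ t, f s1 v ≠ f s2 v then 1 else 0)) ∧
      ((∑ s1, ∑ s2, D2 s1 t s2 * (if ∃ v ∈ t, f s1 v ≠ f s2 v then 1 else 0)) ≤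
        2 * ∑ s1, ∑ s2, D1 s1 t s2 * (if ∃ v ∈ t, f s1 v ≠ f s2 v then 1 else 0)) := by
    intro t
    set g : Finset V → (V → Option Alph) :=
      fun s v => if v ∈ t then some (f s v) else none with hg
    have hiff : ∀ s1 s2 : Finset V,
        (∃ v ∈ t, f s1 v ≠ f s2 v) ↔ g s1 ≠ g s2 := by
      intro s1 s2
      constructor
      · rintro ⟨v, hv, hne⟩ h
        have := congrFun h v
        simp only [hg, if_pos hv] at this
        exact hne (Option.some.inj this)
      · intro h
        by_contra hcon
        push_neg at hcon
        apply h
        funext v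
        by_cases hv : v ∈ t
        · simp only [hg, if_pos hv, hcon v hv]
        · simp only [hg, if_neg hv]
    have htarget := eps_compare (fun a b => D1 a t b) (fun a b => D2 a t b) g
      (fun a b => h1nn a t b) (fun a b => h2nn a t b)
      (fun a b => h1sym a t b) (fun a b => h2sym a t b)
      (fun a => hmarg a t) (fun a b => hindep a t b)
      (by
        intro hpos
        obtain ⟨s1, -, hs1⟩ := Finset.exists_ne_zero_of_sum_ne_zero (ne_of_gt hpos)
        obtain ⟨s2, -, hs2⟩ := Finset.exists_ne_zero_of_sum_ne_zero hs1
        exact hexp t (h2supp s1 t s2 hs2).1)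
    have hcond : ∀ s1 s2 : Finset V, (g s1 ≠ g s2) = (∃ v ∈ t, f s1 v ≠ f s2 v) :=
      fun s1 s2 => propext (hiff s1 s2).symm
    simp only [hcond] at htarget
    exact htarget
  have hnn1 : 0 ≤ ∑ t, ∑ s1, ∑ s2, D1 s1 t s2 *
      (if ∃ v ∈ t, f s1 v ≠ f s2 v then 1 else 0) := by
    refine Finset.sum_nonneg fun t _ => Finset.sum_nonneg fun s1 _ =>
      Finset.sum_nonneg fun s2 _ => mul_nonneg (h1nn s1 t s2) ?_
    positivity
  have hnn2 : 0 ≤ ∑ t, ∑ s1, ∑ s2, D2 s1 t s2 *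
      (if ∃ v ∈ t, f s1 v ≠ f s2 v then 1 else 0) := by
    refine Finset.sum_nonneg fun t _ => Finset.sum_nonneg fun s1 _ =>
      Finset.sum_nonneg fun s2 _ => mul_nonneg (h2nn s1 t s2) ?_
    positivity
  have h13 : (∑ t, ∑ s1, ∑ s2, D1 s1 t s2 *
      (if ∃ v ∈ t, f s1 v ≠ f s2 v then 1 else 0)) ≤
      3 * ∑ t, ∑ s1, ∑ s2, D2 s1 t s2 *
      (if ∃ v ∈ t, f s1 v ≠ f s2 v then 1 else 0) := by
    rw [Finset.mul_sum]
    exact Finset.sum_le_sum fun t _ => (hpt t).1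
  have h22 : (∑ t, ∑ s1, ∑ s2, D2 s1 t s2 *
      (if ∃ v ∈ t, f s1 v ≠ f s2 v then 1 else 0)) ≤
      2 * ∑ t, ∑ s1, ∑ s2, D1 s1 t s2 *
      (if ∃ v ∈ t, f s1 v ≠ f s2 v then 1 else 0) := by
    rw [Finset.mul_sum]
    exact Finset.sum_le_sum fun t _ => (hpt t).2
  constructor <;> linarith
end

section
/- Let G = (V,E) be a graph that is a (1/3)-edge expander, let f assign to each vertex s a value h(s) from a finite set, and suppose the probability that a random edge {s₁,s₂} has h(s₁) ≠ h(s₂) is ε < 1/6. Then the most popular value h* (the value of maximal total vertex probability) satisfies Pr[{s : h(s) = h*}] ≥ 1 − 3ε. -/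
open Finset
open scoped Classical

variable {V : Type*} [Fintype V] [DecidableEq V]

/-- **Popular value on an edge expander.** Let `G` be a `(1/3)`-edge expander, let `h`
assign a value from a finite set `K` to each vertex, and suppose the probability that a
random edge has differently-labeled endpoints is `ε < 1/6`. Then the most popular value
`k*` (any value whose class has maximal probability) satisfies
`Pr[{s : h(s) = k*}] ≥ 1 − 3ε`. -/
theorem popular_value_of_edge_expander
    {K : Type*} [Fintype K]
    (w : V → V → ℝ) (hsym : ∀ v u, w v u = w u v) (hnn : ∀ v u, 0 ≤ w v u)
    (htot : ∑ v, ∑ u, w v u = 1)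
    (hexp : ∀ S : Finset V, 0 < pmass w S → pmass w S ≤ 1 / 2 →
      (1 / 3) * pmass w S ≤ emass w S Sᶜ)
    (h : V → K) (eps : ℝ)
    (heps : (∑ v, ∑ u, if h v ≠ h u then w v u else 0) = eps)
    (hlt : eps < 1 / 6)
    (kstar : K)
    (hpop : ∀ k : K, pmass w (Finset.univ.filter fun v => h v = k) ≤
      pmass w (Finset.univ.filter fun v => h v = kstar)) :
    1 - 3 * eps ≤ pmass w (Finset.univ.filter fun v => h v = kstar) := by
  classical
  set S : Finset V := Finset.univ.filter (fun v => h v = kstar) with hSdef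
  have hpmnn : ∀ T : Finset V, 0 ≤ pmass w T := by
    intro T
    refine Finset.sum_nonneg fun v _ => Finset.sum_nonneg fun u _ => hnn v u
  have hemnn : ∀ T U : Finset V, 0 ≤ emass w T U := by
    intro T U
    refine Finset.sum_nonneg fun v _ => Finset.sum_nonneg fun u _ => hnn v u
  have hepsnn : 0 ≤ eps := by
    rw [← heps]
    refine Finset.sum_nonneg fun v _ => Finset.sum_nonneg fun u _ => ?_
    split <;> simp [hnn]
  have h1 : pmass w (Finset.univ : Finset V) = 1 := by
    simpa [pmass, vmass] using htot
  -- sum of class masses is 1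
  have hpart : ∑ k : K, pmass w (Finset.univ.filter fun v => h v = k) = 1 := by
    rw [← h1]
    simp only [pmass]
    exact Finset.sum_fiberwise Finset.univ h (vmass w)
  -- sum of crossing masses equals eps
  have hcross : ∑ k : K, emass w (Finset.univ.filter fun v => h v = k)
      (Finset.univ.filter fun v => h v = k)ᶜ = eps := by
    rw [← heps]
    have : ∀ k : K, emass w (Finset.univ.filter fun v => h v = k)
        (Finset.univ.filter fun v => h v = k)ᶜ
        = ∑ v ∈ Finset.univ.filter (fun v => h v = k),
            ∑ u, if h v ≠ h u then w v u else 0 := by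
      intro k
      unfold emass
      refine Finset.sum_congr rfl fun v hv => ?_
      rw [Finset.mem_filter] at hv
      rw [Finset.compl_filter, Finset.sum_filter]
      refine Finset.sum_congr rfl fun u _ => ?_
      simp [hv.2, eq_comm]
    simp only [this]
    exact Finset.sum_fiberwise Finset.univ h
      (fun v => ∑ u, if h v ≠ h u then w v u else 0)
  -- some class has mass > 1/2
  have hbig : ∃ k : K, 1 / 2 < pmass w (Finset.univ.filter fun v => h v = k) := by
    by_contra hcon
    push_neg at hcon
    have hle : ∀ k : K, (1 / 3 : ℝ) * pmass w (Finset.univ.filter fun v => h v = k)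
        ≤ emass w (Finset.univ.filter fun v => h v = k)
            (Finset.univ.filter fun v => h v = k)ᶜ := by
      intro k
      rcases lt_or_eq_of_le (hpmnn (Finset.univ.filter fun v => h v = k)) with hp | hp
      · exact hexp _ hp (hcon k)
      · rw [← hp, mul_zero]; exact hemnn _ _
    have := Finset.sum_le_sum (fun k (_ : k ∈ Finset.univ) => hle k)
    rw [hcross, ← Finset.mul_sum, hpart, mul_one] at this
    linarith
  obtain ⟨k, hk⟩ := hbig
  have hShalf : 1 / 2 < pmass w S := lt_of_lt_of_le hk (hpop k)
  -- pmass S + pmass Sᶜ = 1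
  have hsplit : pmass w S + pmass w Sᶜ = 1 := by
    rw [← h1]
    unfold pmass
    rw [← Finset.sum_add_sum_compl S (vmass w)]
  have hSc_half : pmass w Sᶜ ≤ 1 / 2 := by linarith
  -- emass Sᶜ S ≤ eps
  have hcut : emass w Sᶜ (Sᶜ)ᶜ ≤ eps := by
    rw [compl_compl, ← heps]
    unfold emass
    calc ∑ v ∈ Sᶜ, ∑ u ∈ S, w v u
        = ∑ v ∈ Sᶜ, ∑ u ∈ S, if h v ≠ h u then w v u else 0 := by
          refine Finset.sum_congr rfl fun v hv => Finset.sum_congr rfl fun u hu => ?_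
          rw [hSdef, Finset.compl_filter, Finset.mem_filter] at hv
          rw [hSdef, Finset.mem_filter] at hu
          have : h v ≠ h u := by rw [hu.2]; exact hv.2
          simp [this]
      _ ≤ ∑ v ∈ Sᶜ, ∑ u, if h v ≠ h u then w v u else 0 := by
          refine Finset.sum_le_sum fun v _ => ?_
          refine Finset.sum_le_sum_of_subset_of_nonneg (Finset.subset_univ S) fun u _ _ => ?_
          split <;> simp [hnn]
      _ ≤ ∑ v, ∑ u, if h v ≠ h u then w v u else 0 := by
          refine Finset.sum_le_sum_of_subset_of_nonneg (Finset.subset_univ Sᶜ)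
            fun v _ _ => Finset.sum_nonneg fun u _ => ?_
          split <;> simp [hnn]
  rcases lt_or_eq_of_le (hpmnn Sᶜ) with hp | hp
  · have := hexp Sᶜ hp hSc_half
    have : pmass w Sᶜ ≤ 3 * eps := by linarith
    linarith
  · linarith
end
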